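/- (Convergence of approximate minimizers under epi-convergence.) Let X be a topological space, f_n : X → ℝ∪{±∞} a sequence of functions epi-converging to f, and x_n points with f_n(x_n) ≤ inf f_n + ε_n where ε_n ↓ 0. Then for every subsequence x_{n_k} converging to a point x_0, one has f(x_0) = inf f and f_{n_k}(x_{n_k}) → inf f. -/

import Mathlib

/-! Along the subsequence, the lower epi-limit inequality gives `f x₀ ≤ liminf fₙ(xₙ)`, while
comparing `xₙ` with a recovery sequence of an arbitrary `z` gives `limsup fₙ(xₙ) ≤ f z`.
Hence `f x₀ ≤ liminf ≤ limsup ≤ inf f ≤ f x₀`, and all of these coincide. -/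

open Filter Topology

theorem EReal.limsup_le_limsup_of_le_add_of_tendsto_zero {ι : Type*} {l : Filter ι} [l.NeBot]
    {a b : ι → EReal} {ε : ι → ℝ} (hab : ∀ᶠ n in l, a n ≤ b n + ε n)
    (hε : Tendsto ε l (𝓝 0)) : limsup a l ≤ limsup b l := by
  have hε' : limsup (fun n => (ε n : EReal)) l = 0 := (EReal.tendsto_coe.2 hε).limsup_eq
  calc limsup a l ≤ limsup (b + fun n => (ε n : EReal)) l := limsup_le_limsup hab
    _ ≤ limsup b l + limsup (fun n => (ε n : EReal)) l :=
      EReal.limsup_add_le (.inr (by simp [hε'])) (.inr (by simp [hε']))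
    _ = limsup b l := by rw [hε', add_zero]

theorem limsup_le_iInf_of_approxMin {ι X : Type*} {l : Filter ι} [l.NeBot]
    {f : X → EReal} {fn : ι → X → EReal}
    (hupper : ∀ z, ∃ u : ι → X, limsup (fun n => fn n (u n)) l ≤ f z)
    {ε : ι → ℝ} (hε : Tendsto ε l (𝓝 0))
    {x : ι → X} (hx : ∀ n, fn n (x n) ≤ (⨅ z, fn n z) + (ε n : EReal)) :
    limsup (fun n => fn n (x n)) l ≤ ⨅ z, f z := by
  refine le_iInf fun z => ?_
  obtain ⟨u, hu⟩ := hupper z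
  exact le_trans (EReal.limsup_le_limsup_of_le_add_of_tendsto_zero
    (Eventually.of_forall fun n => (hx n).trans (by gcongr; exact iInf_le _ _)) hε) hu

theorem StrictMono.exists_tendsto_eqOn_range {X : Type*} [TopologicalSpace X] {φ : ℕ → ℕ}
    (hφ : StrictMono φ) {x : ℕ → X} {x₀ : X} (hconv : Tendsto (fun k => x (φ k)) atTop (𝓝 x₀)) :
    ∃ u : ℕ → X, Tendsto u atTop (𝓝 x₀) ∧ Set.EqOn u x (Set.range φ) := by
  classical
  refine ⟨(Set.range φ).piecewise x fun _ => x₀, ?_, Set.piecewise_eqOn _ _ _⟩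
  refine tendsto_atTop'.2 fun s hs => ?_
  obtain ⟨N, hN⟩ := tendsto_atTop'.1 hconv s hs
  refine ⟨φ N, fun n hn => ?_⟩
  by_cases hmem : n ∈ Set.range φ
  · obtain ⟨k, rfl⟩ := hmem
    rw [Set.piecewise_eq_of_mem _ _ _ (Set.mem_range_self k)]
    exact hN k (hφ.le_iff_le.1 hn)
  · rw [Set.piecewise_eq_of_notMem _ _ _ hmem]
    exact mem_of_mem_nhds hs

theorem le_liminf_subseq_of_epi_lower {X : Type*} [TopologicalSpace X]
    {f : X → EReal} {fn : ℕ → X → EReal}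
    (hlower : ∀ (x : X) (u : ℕ → X), Tendsto u atTop (𝓝 x) →
      f x ≤ liminf (fun n => fn n (u n)) atTop)
    {φ : ℕ → ℕ} (hφ : StrictMono φ) {x : ℕ → X} {x₀ : X}
    (hconv : Tendsto (fun k => x (φ k)) atTop (𝓝 x₀)) :
    f x₀ ≤ liminf (fun k => fn (φ k) (x (φ k))) atTop := by
  obtain ⟨u, hu, hux⟩ := hφ.exists_tendsto_eqOn_range hconv
  calc f x₀ ≤ liminf (fun n => fn n (u n)) atTop := hlower x₀ u hu
    _ ≤ liminf ((fun n => fn n (u n)) ∘ φ) atTop := hφ.tendsto_atTop.liminf_le_liminf_comp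
    _ = liminf (fun k => fn (φ k) (x (φ k))) atTop := by
      simp only [Function.comp_def, hux (Set.mem_range_self _)]

theorem epi_convergence_approx_minimizers_general
    {X : Type*} [TopologicalSpace X]
    (f : X → EReal) (fn : ℕ → X → EReal)
    -- epi-convergence, lower part: along every sequence converging to x the liminf dominates f x
    (hlower : ∀ (x : X) (u : ℕ → X), Tendsto u atTop (𝓝 x) →
      f x ≤ liminf (fun n => fn n (u n)) atTop)
    -- epi-convergence, upper part: some sequence converging to x achieves f x in the limsup
    (hupper : ∀ x : X, ∃ u : ℕ → X, Tendsto u atTop (𝓝 x) ∧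
      limsup (fun n => fn n (u n)) atTop ≤ f x)
    (ε : ℕ → ℝ)
    (hεlim : Tendsto ε atTop (𝓝 0))
    (x : ℕ → X) (hx : ∀ n, fn n (x n) ≤ (⨅ z, fn n z) + (ε n : EReal))
    (φ : ℕ → ℕ) (hφ : StrictMono φ) (x₀ : X)
    (hconv : Tendsto (fun k => x (φ k)) atTop (𝓝 x₀)) :
    f x₀ = (⨅ z, f z) ∧
      Tendsto (fun k => fn (φ k) (x (φ k))) atTop (𝓝 (⨅ z, f z)) := by
  have hliminf : f x₀ ≤ liminf (fun k => fn (φ k) (x (φ k))) atTop :=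
    le_liminf_subseq_of_epi_lower hlower hφ hconv
  have hlimsup : limsup (fun k => fn (φ k) (x (φ k))) atTop ≤ ⨅ z, f z :=
    (hφ.tendsto_atTop.limsup_comp_le_limsup (u := fun n => fn n (x n))).trans
      (limsup_le_iInf_of_approxMin
        (fun z => (hupper z).imp fun _ => And.right) hεlim hx)
  have hmin : f x₀ = ⨅ z, f z :=
    le_antisymm (hliminf.trans (le_trans liminf_le_limsup hlimsup)) (iInf_le f x₀)
  exact ⟨hmin, tendsto_of_le_liminf_of_limsup_le (hmin ▸ hliminf) hlimsup⟩

/-- Attouch's theorem on convergence of approximate minimizers under epi-convergence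
(Proposition 2.1): if `f_n` epi-converges to `f` and `x_n` are `ε_n`-approximate
minimizers of `f_n` with `ε_n ↓ 0`, then along any subsequence `x_{n_k} → x₀` we have
`f x₀ = inf f` and `f_{n_k}(x_{n_k}) → inf f`. -/
theorem epi_convergence_approx_minimizers
    {X : Type*} [TopologicalSpace X]
    (f : X → EReal) (fn : ℕ → X → EReal)
    -- epi-convergence, lower part: along every sequence converging to x the liminf dominates f x
    (hlower : ∀ (x : X) (u : ℕ → X), Tendsto u atTop (𝓝 x) →
      f x ≤ liminf (fun n => fn n (u n)) atTop)
    -- epi-convergence, upper part: some sequence converging to x achieves f x in the limsup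
    (hupper : ∀ x : X, ∃ u : ℕ → X, Tendsto u atTop (𝓝 x) ∧
      limsup (fun n => fn n (u n)) atTop ≤ f x)
    (ε : ℕ → ℝ) (hε0 : ∀ n, 0 ≤ ε n) (hεanti : Antitone ε)
    (hεlim : Tendsto ε atTop (𝓝 0))
    (x : ℕ → X) (hx : ∀ n, fn n (x n) ≤ (⨅ z, fn n z) + (ε n : EReal))
    (φ : ℕ → ℕ) (hφ : StrictMono φ) (x₀ : X)
    (hconv : Tendsto (fun k => x (φ k)) atTop (𝓝 x₀)) :
    f x₀ = (⨅ z, f z) ∧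
      Tendsto (fun k => fn (φ k) (x (φ k))) atTop (𝓝 (⨅ z, f z)) :=
  epi_convergence_approx_minimizers_general f fn hlower hupper ε hεlim x hx φ hφ x₀ hconv
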